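/- Let F be a finite field with q elements and α ≠ β in F. Then the number of 4×4 matrices over F that are diagonalizable with eigenvalue set exactly {α, β} equals q⁸ + q⁷ + 4q⁶ + 3q⁵ + 3q⁴ + 2q³. -/

import Mathlib

/-!
A matrix similar to a diagonal matrix with entries exactly `α` and `β` is similar to
`diag(α, …, α, β, …, β)` with `k` entries `α` for exactly one `0 < k < n`: permutation matrices
sort the diagonal, and `k = n - rank (A - α)` separates the classes. Each class is a conjugation
orbit, whose stabilizer, the centralizer of the diagonal matrix, consists for `α ≠ β` of the
invertible block diagonal matrices `GL_k × GL_{n-k}`. By orbit–stabilizer the count is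
`∑_{0<k<n} |GL_n| / (|GL_k| |GL_{n-k}|)`, evaluated for `n = 4` with `|GL_m| = ∏_{i<m} (q^m - q^i)`.
-/

open Matrix MulAction Finset Function

namespace ConjAct

variable {M : Type*} [Monoid M]

theorem mem_orbit_units_iff {a b : M} :
    a ∈ orbit (ConjAct Mˣ) b ↔ ∃ u : Mˣ, a = u * b * ↑u⁻¹ := by
  constructor
  · rintro ⟨g, rfl⟩
    exact ⟨ofConjAct g, units_smul_def g b⟩
  · rintro ⟨u, rfl⟩
    exact ⟨toConjAct u, show toConjAct u • b = _ by rw [units_smul_def, ofConjAct_toConjAct]⟩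

theorem mem_stabilizer_units_iff {a : M} {g : ConjAct Mˣ} :
    g ∈ stabilizer (ConjAct Mˣ) a ↔ Commute ((ofConjAct g : Mˣ) : M) a := by
  rw [mem_stabilizer_iff, units_smul_def, Units.mul_inv_eq_iff_eq_mul]
  rfl

theorem card_stabilizer_units (a : M) :
    Nat.card (stabilizer (ConjAct Mˣ) a) = Nat.card {u : Mˣ // Commute (u : M) a} :=
  Nat.card_congr <| ofConjAct.toEquiv.subtypeEquiv fun _ => mem_stabilizer_units_iff

end ConjAct

theorem Units.card_eq_card_of_injective {M N : Type*} [Monoid M] [Monoid N] {f : M →* N}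
    (hf : Injective f) (hinv : ∀ u : Nˣ, (u : N) ∈ Set.range f → (↑u⁻¹ : N) ∈ Set.range f) :
    Nat.card Mˣ = Nat.card {u : Nˣ // (u : N) ∈ Set.range f} := by
  refine Nat.card_congr (Equiv.ofBijective (fun u => ⟨Units.map f u, u, rfl⟩) ⟨?_, ?_⟩)
  · intro u v huv
    exact Units.ext (hf (congrArg (fun w : {u : Nˣ // (u : N) ∈ Set.range f} => (w.1 : N)) huv))
  · rintro ⟨u, x, hx⟩
    obtain ⟨y, hy⟩ := hinv u ⟨x, hx⟩
    have hxy : x * y = 1 := hf (by rw [map_mul, map_one, hx, hy, Units.mul_inv])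
    have hyx : y * x = 1 := hf (by rw [map_mul, map_one, hx, hy, Units.inv_mul])
    exact ⟨⟨x, y, hxy, hyx⟩, Subtype.ext (Units.ext hx)⟩

theorem Finset.range_piecewise_const {ι γ : Type*} [Fintype ι] [DecidableEq ι] {α β : γ}
    {s : Finset ι} (hs : s.Nonempty) (hs' : sᶜ.Nonempty) :
    Set.range (s.piecewise (fun _ => α) (fun _ => β)) = {α, β} := by
  refine (Set.range_subset_iff.mpr fun i => ?_).antisymm (Set.insert_subset_iff.mpr ⟨?_, ?_⟩)
  · by_cases hi : i ∈ s <;> simp [hi]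
  · obtain ⟨i, hi⟩ := hs
    exact ⟨i, piecewise_eq_of_mem _ _ _ hi⟩
  · obtain ⟨i, hi⟩ := hs'
    exact Set.singleton_subset_iff.mpr ⟨i, piecewise_eq_of_notMem _ _ _ (mem_compl.mp hi)⟩

namespace Matrix

section Centralizer

variable {R : Type*} [CommRing R]

theorem commute_diagonal_iff [IsDomain R] {n : Type*} [Fintype n] [DecidableEq n]
    {M : Matrix n n R} {d : n → R} :
    Commute M (diagonal d) ↔ ∀ i j, d i ≠ d j → M i j = 0 := by
  simp only [Commute, SemiconjBy, ← Matrix.ext_iff, mul_diagonal, diagonal_mul]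
  refine forall₂_congr fun i j => ⟨fun h hne => ?_, fun h => ?_⟩
  · have : (d j - d i) * M i j = 0 := by linear_combination h
    exact (mul_eq_zero.mp this).resolve_left (sub_ne_zero.mpr hne.symm)
  · by_cases hij : d i = d j
    · rw [hij, mul_comm]
    · simp [h hij]

variable {I J : Type*} [Fintype I] [Fintype J] [DecidableEq I] [DecidableEq J]

variable (R I J) in
def fromBlocksDiagHom : Matrix I I R × Matrix J J R →* Matrix (I ⊕ J) (I ⊕ J) R where
  toFun p := fromBlocks p.1 0 0 p.2
  map_one' := fromBlocks_one
  map_mul' p q := by simp [fromBlocks_multiply]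

theorem fromBlocksDiagHom_injective : Injective (fromBlocksDiagHom R I J) := by
  intro p q h
  obtain ⟨h₁, -, -, h₂⟩ := fromBlocks_inj.mp h
  exact Prod.ext h₁ h₂

theorem commute_diagonal_sumElim_iff [IsDomain R] {a b : R} (hab : a ≠ b)
    {M : Matrix (I ⊕ J) (I ⊕ J) R} :
    Commute M (diagonal (Sum.elim (fun _ => a) (fun _ => b))) ↔
      M ∈ Set.range (fromBlocksDiagHom R I J) := by
  rw [commute_diagonal_iff]
  constructor
  · intro h
    refine ⟨(M.toBlocks₁₁, M.toBlocks₂₂), ?_⟩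
    ext (i | i) (j | j)
    · rfl
    · exact (h _ _ (by simpa using hab)).symm
    · exact (h _ _ (by simpa using hab.symm)).symm
    · rfl
  · rintro ⟨p, rfl⟩ (i | i) (j | j) <;> simp [fromBlocksDiagHom]

theorem card_units_commute_diagonal_sumElim [IsDomain R] {a b : R} (hab : a ≠ b) :
    Nat.card {g : (Matrix (I ⊕ J) (I ⊕ J) R)ˣ //
        Commute (g : Matrix (I ⊕ J) (I ⊕ J) R) (diagonal (Sum.elim (fun _ => a) (fun _ => b)))} =
      Nat.card (Matrix I I R)ˣ * Nat.card (Matrix J J R)ˣ := by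
  rw [← Nat.card_prod, ← Nat.card_congr MulEquiv.prodUnits.toEquiv,
    Units.card_eq_card_of_injective fromBlocksDiagHom_injective]
  · simp_rw [commute_diagonal_sumElim_iff hab]
  · intro u hu
    rw [← commute_diagonal_sumElim_iff hab] at hu ⊢
    exact hu.units_inv_left

end Centralizer

section Conjugation

variable {R m n : Type*} [CommRing R] [Fintype m] [DecidableEq m] [Fintype n] [DecidableEq n]

theorem card_units_reindex (e : m ≃ n) : Nat.card (Matrix m m R)ˣ = Nat.card (Matrix n n R)ˣ :=
  Nat.card_congr (Units.mapEquiv (reindexAlgEquiv R R e).toMulEquiv).toEquiv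

theorem card_units_commute_reindex (e : m ≃ n) (A : Matrix m m R) :
    Nat.card {g : (Matrix m m R)ˣ // Commute (g : Matrix m m R) A} =
      Nat.card {g : (Matrix n n R)ˣ // Commute (g : Matrix n n R) (reindex e e A)} :=
  Nat.card_congr <| (Units.mapEquiv (reindexAlgEquiv R R e).toMulEquiv).toEquiv.subtypeEquiv
    fun _ => (commute_map_iff (reindexAlgEquiv R R e).injective).symm

theorem diagonal_comp_perm_mem_orbit (d : n → R) (σ : Equiv.Perm n) :
    diagonal (d ∘ σ) ∈ orbit (ConjAct (Matrix n n R)ˣ) (diagonal d) := by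
  refine ConjAct.mem_orbit_units_iff.mpr ⟨permMatrixHom.toHomUnits σ⁻¹, ?_⟩
  rw [← map_inv, inv_inv]
  simp only [MonoidHom.coe_toHomUnits, permMatrixHom_apply, inv_inv]
  rw [PEquiv.toMatrix_toPEquiv_mul, PEquiv.mul_toMatrix_toPEquiv, submatrix_submatrix]
  exact (submatrix_diagonal_equiv d σ).symm

theorem rank_sub_smul_one_of_mem_orbit {A B : Matrix n n R}
    (h : A ∈ orbit (ConjAct (Matrix n n R)ˣ) B) (c : R) :
    (A - c • 1).rank = (B - c • 1).rank := by
  obtain ⟨u, rfl⟩ := ConjAct.mem_orbit_units_iff.mp h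
  have hconj : (u : Matrix n n R) * B * (↑u⁻¹ : Matrix n n R) - c • 1 =
      u * (B - c • 1) * (↑u⁻¹ : Matrix n n R) := by
    rw [mul_sub, sub_mul, mul_smul_comm, mul_one, smul_mul_assoc, Units.mul_inv]
  rw [hconj, rank_mul_eq_left_of_isUnit_det _ _ ((isUnit_iff_isUnit_det _).mp u⁻¹.isUnit),
    rank_mul_eq_right_of_isUnit_det _ _ ((isUnit_iff_isUnit_det _).mp u.isUnit)]

end Conjugation

section Piecewise

variable {R n : Type*} [CommRing R] [Fintype n] [DecidableEq n] {α β : R}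

variable (α β) in
def diagonalPiecewise (s : Finset n) : Matrix n n R :=
  diagonal (s.piecewise (fun _ => α) (fun _ => β))

theorem diagonalPiecewise_mem_orbit {s t : Finset n} (h : #s = #t) :
    diagonalPiecewise α β s ∈ orbit (ConjAct (Matrix n n R)ˣ) (diagonalPiecewise α β t) := by
  let e : {x // x ∈ s} ≃ {x // x ∈ t} := Fintype.equivOfCardEq (by simpa using h)
  let f : {x // x ∉ s} ≃ {x // x ∉ t} :=
    Fintype.equivOfCardEq (by simp [Fintype.card_subtype_compl, h])
  have hperm : s.piecewise (fun _ => α) (fun _ => β) =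
      t.piecewise (fun _ => α) (fun _ => β) ∘ e.subtypeCongr f := by
    ext x
    simp only [Function.comp_apply, Equiv.subtypeCongr, Equiv.trans_apply]
    by_cases hx : x ∈ s
    · rw [Equiv.sumCompl_symm_apply_of_pos hx, Equiv.sumCongr_apply, Sum.map_inl,
        Equiv.sumCompl_apply_inl, piecewise_eq_of_mem _ _ _ (e _).2, piecewise_eq_of_mem _ _ _ hx]
    · rw [Equiv.sumCompl_symm_apply_of_neg hx, Equiv.sumCongr_apply, Sum.map_inr,
        Equiv.sumCompl_apply_inr, piecewise_eq_of_notMem _ _ _ (f _).2,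
        piecewise_eq_of_notMem _ _ _ hx]
  simp only [diagonalPiecewise, hperm]
  exact diagonal_comp_perm_mem_orbit _ _

theorem rank_diagonalPiecewise_sub {F : Type*} [Field F] {α β : F} (hαβ : α ≠ β) (s : Finset n) :
    (diagonalPiecewise α β s - α • 1).rank = #sᶜ := by
  classical
  rw [diagonalPiecewise, ← diagonal_one, ← diagonal_smul, diagonal_sub, rank_diagonal,
    ← Fintype.card_coe]
  refine Fintype.card_congr (Equiv.subtypeEquivRight fun x => ?_)
  by_cases hx : x ∈ s <;> simp [hx, sub_eq_zero, hαβ.symm]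

theorem card_units_commute_diagonalPiecewise [IsDomain R] (hαβ : α ≠ β) (s : Finset n) :
    Nat.card {g : (Matrix n n R)ˣ // Commute (g : Matrix n n R) (diagonalPiecewise α β s)} =
      Nat.card (Matrix (Fin #s) (Fin #s) R)ˣ *
        Nat.card (Matrix (Fin (Fintype.card n - #s)) (Fin (Fintype.card n - #s)) R)ˣ := by
  let e := Equiv.sumCompl (· ∈ s)
  have hblock : reindex e.symm e.symm (diagonalPiecewise α β s) =
      diagonal (Sum.elim (fun _ => α) (fun _ => β)) := by
    rw [diagonalPiecewise, reindex_apply, Equiv.symm_symm, submatrix_diagonal_equiv]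
    congr 1
    ext (x | x) <;> simp [e, x.2]
  rw [card_units_commute_reindex e.symm, hblock, card_units_commute_diagonal_sumElim hαβ,
    card_units_reindex s.equivFin, card_units_reindex (Fintype.equivFinOfCardEq
      (by rw [Fintype.card_subtype_compl, Fintype.card_coe] : Fintype.card {x // x ∉ s} = _))]

end Piecewise

section SimilarityClass

variable {F n : Type*} [Field F] [Fintype n] [DecidableEq n] {α β : F}

variable (n α β) in
def diagSimilarityClass (k : ℕ) : Set (Matrix n n F) :=
  ⋃ (s : Finset n) (_ : #s = k), orbit (ConjAct (Matrix n n F)ˣ) (diagonalPiecewise α β s)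

theorem diagSimilarityClass_eq_orbit {k : ℕ} {s : Finset n} (hs : #s = k) :
    diagSimilarityClass n α β k = orbit (ConjAct (Matrix n n F)ˣ) (diagonalPiecewise α β s) :=
  (Set.iUnion₂_subset fun _ ht =>
      (orbit_eq_iff.mpr (diagonalPiecewise_mem_orbit (ht.trans hs.symm))).le).antisymm
    (Set.subset_iUnion₂_of_subset s hs le_rfl)

theorem eq_card_sub_rank_of_mem_diagSimilarityClass (hαβ : α ≠ β) {k : ℕ} {A : Matrix n n F}
    (hA : A ∈ diagSimilarityClass n α β k) : k = Fintype.card n - (A - α • 1).rank := by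
  obtain ⟨s, hs, hAs⟩ := Set.mem_iUnion₂.mp hA
  rw [rank_sub_smul_one_of_mem_orbit hAs, rank_diagonalPiecewise_sub hαβ, ← hs,
    ← card_add_card_compl s, Nat.add_sub_cancel]

theorem disjoint_diagSimilarityClass (hαβ : α ≠ β) {k l : ℕ} (hkl : k ≠ l) :
    Disjoint (diagSimilarityClass n α β k) (diagSimilarityClass n α β l) :=
  Set.disjoint_left.mpr fun _ hk hl => hkl <|
    (eq_card_sub_rank_of_mem_diagSimilarityClass hαβ hk).trans
      (eq_card_sub_rank_of_mem_diagSimilarityClass hαβ hl).symm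

theorem card_diagSimilarityClass_mul (hαβ : α ≠ β) {k : ℕ} (hk : k ≤ Fintype.card n) :
    Nat.card (diagSimilarityClass n α β k) * (Nat.card (Matrix (Fin k) (Fin k) F)ˣ *
        Nat.card (Matrix (Fin (Fintype.card n - k)) (Fin (Fintype.card n - k)) F)ˣ) =
      Nat.card (Matrix n n F)ˣ := by
  obtain ⟨s, -, rfl⟩ := exists_subset_card_eq (s := univ) (by simpa using hk)
  rw [diagSimilarityClass_eq_orbit rfl, ← card_units_commute_diagonalPiecewise hαβ,
    ← ConjAct.card_stabilizer_units, Nat.card_coe_set_eq, ← index_stabilizer, mul_comm,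
    Subgroup.card_mul_index]
  exact Nat.card_congr ConjAct.ofConjAct.toEquiv

theorem setOf_similar_diagonal_eq_iUnion (hαβ : α ≠ β) :
    {A : Matrix n n F | ∃ (d : n → F) (P : (Matrix n n F)ˣ),
        Set.range d = {α, β} ∧ A = P * diagonal d * P⁻¹} =
      ⋃ k : Ioo 0 (Fintype.card n), diagSimilarityClass n α β k := by
  classical
  ext A
  simp only [Set.mem_ofPred_eq, Set.mem_iUnion, diagSimilarityClass, Subtype.exists, mem_Ioo,
    ConjAct.mem_orbit_units_iff, exists_prop]
  constructor
  · rintro ⟨d, P, hd, rfl⟩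
    have hvalue (i : n) : d i = α ∨ d i = β := by
      simpa [hd] using Set.mem_range_self (f := d) i
    obtain ⟨iα, hiα⟩ : α ∈ Set.range d := hd ▸ Set.mem_insert α {β}
    obtain ⟨iβ, hiβ⟩ : β ∈ Set.range d := hd ▸ Set.mem_insert_of_mem α rfl
    set s := univ.filter (d · = α)
    have hds : s.piecewise (fun _ => α) (fun _ => β) = d := by
      ext i
      rcases hvalue i with hi | hi <;> simp [s, hi, hαβ.symm]
    refine ⟨#s, ⟨card_pos.mpr ⟨iα, by simp [s, hiα]⟩, card_lt_univ_of_notMem (x := iβ) ?_⟩,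
      s, rfl, P, by rw [diagonalPiecewise, hds]⟩
    simp [s, hiβ, hαβ.symm]
  · rintro ⟨k, ⟨hk0, hkn⟩, s, rfl, P, rfl⟩
    refine ⟨_, P, range_piecewise_const (card_pos.mp hk0) (card_pos.mp ?_), rfl⟩
    rw [card_compl]
    omega

variable [Finite F]

theorem card_similar_diagonal_eq_sum (hαβ : α ≠ β) :
    Nat.card {A : Matrix n n F // ∃ (d : n → F) (P : (Matrix n n F)ˣ),
        Set.range d = {α, β} ∧ A = P * diagonal d * P⁻¹} =
      ∑ k ∈ Ioo 0 (Fintype.card n), Nat.card (diagSimilarityClass n α β k) := by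
  rw [← sum_coe_sort, ← Nat.card_sigma, ← Nat.card_congr (Set.unionEqSigmaOfDisjoint ?_),
    ← setOf_similar_diagonal_eq_iUnion hαβ]
  · rfl
  · exact fun k l hkl => disjoint_diagSimilarityClass hαβ (Subtype.coe_ne_coe.mpr hkl)

theorem card_similar_diagonal (hαβ : α ≠ β) :
    Nat.card {A : Matrix n n F // ∃ (d : n → F) (P : (Matrix n n F)ˣ),
        Set.range d = {α, β} ∧ A = P * diagonal d * P⁻¹} =
      ∑ k ∈ Ioo 0 (Fintype.card n), Nat.card (Matrix n n F)ˣ /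
        (Nat.card (Matrix (Fin k) (Fin k) F)ˣ *
          Nat.card (Matrix (Fin (Fintype.card n - k)) (Fin (Fintype.card n - k)) F)ˣ) := by
  rw [card_similar_diagonal_eq_sum hαβ]
  refine sum_congr rfl fun k hk => ?_
  exact (Nat.div_eq_of_eq_mul_left (Nat.mul_pos Nat.card_pos Nat.card_pos)
    (card_diagSimilarityClass_mul hαβ (mem_Ioo.mp hk).2.le).symm).symm

end SimilarityClass

section GeneralLinearGroup

variable {F : Type*} [Field F] [Fintype F] {q : ℕ}

theorem card_GL_fin_int (hq : Fintype.card F = q) (m : ℕ) :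
    (Nat.card (Matrix (Fin m) (Fin m) F)ˣ : ℤ) = ∏ i : Fin m, ((q : ℤ) ^ m - q ^ (i : ℕ)) := by
  rw [card_GL_field, Nat.cast_prod, hq]
  refine prod_congr rfl fun i _ => ?_
  rw [Nat.cast_sub (Nat.pow_le_pow_right (hq ▸ Fintype.card_pos) i.2.le)]
  push_cast
  rfl

theorem card_GL_div_eq (hq : Fintype.card F = q) {m k c : ℕ}
    (h : (c : ℤ) * ((∏ i : Fin k, ((q : ℤ) ^ k - q ^ (i : ℕ))) *
      ∏ i : Fin (m - k), ((q : ℤ) ^ (m - k) - q ^ (i : ℕ))) =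
        ∏ i : Fin m, ((q : ℤ) ^ m - q ^ (i : ℕ))) :
    Nat.card (Matrix (Fin m) (Fin m) F)ˣ / (Nat.card (Matrix (Fin k) (Fin k) F)ˣ *
      Nat.card (Matrix (Fin (m - k)) (Fin (m - k)) F)ˣ) = c := by
  refine Nat.div_eq_of_eq_mul_left (Nat.mul_pos Nat.card_pos Nat.card_pos) ?_
  apply Nat.cast_injective (R := ℤ)
  push_cast
  rw [card_GL_fin_int hq, card_GL_fin_int hq, card_GL_fin_int hq, h]

end GeneralLinearGroup

end Matrix

theorem stmt_8_general (F : Type) [Field F] [Fintype F]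
    (q : ℕ) (hq : Fintype.card F = q) (α β : F) (hαβ : α ≠ β) :
    Nat.card {A : Matrix (Fin 4) (Fin 4) F //
        ∃ (d : Fin 4 → F) (P : (Matrix (Fin 4) (Fin 4) F)ˣ),
          Set.range d = {α, β} ∧
          A = (P : Matrix (Fin 4) (Fin 4) F) * Matrix.diagonal d *
              ((P⁻¹ : _) : Matrix (Fin 4) (Fin 4) F)} =
      q ^ 8 + q ^ 7 + 4 * q ^ 6 + 3 * q ^ 5 + 3 * q ^ 4 + 2 * q ^ 3 := by
  rw [card_similar_diagonal hαβ, Fintype.card_fin, show Ioo 0 4 = {1, 2, 3} by decide,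
    sum_insert (by decide), sum_insert (by decide), sum_singleton,
    card_GL_div_eq hq (c := q ^ 6 + q ^ 5 + q ^ 4 + q ^ 3) (by simp [Fin.prod_univ_succ]; ring),
    card_GL_div_eq hq (c := q ^ 8 + q ^ 7 + 2 * q ^ 6 + q ^ 5 + q ^ 4)
      (by simp [Fin.prod_univ_succ]; ring),
    card_GL_div_eq hq (c := q ^ 6 + q ^ 5 + q ^ 4 + q ^ 3) (by simp [Fin.prod_univ_succ]; ring)]
  ring

/-- The number of `4 × 4` matrices over a finite field with `q` elements that are
diagonalizable with eigenvalue set exactly `{α, β}` (with `α ≠ β`) equals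
`q⁸ + q⁷ + 4q⁶ + 3q⁵ + 3q⁴ + 2q³`. -/
theorem stmt_8 (F : Type) [Field F] [Fintype F] [DecidableEq F]
    (q : ℕ) (hq : Fintype.card F = q) (α β : F) (hαβ : α ≠ β) :
    Nat.card {A : Matrix (Fin 4) (Fin 4) F //
        ∃ (d : Fin 4 → F) (P : (Matrix (Fin 4) (Fin 4) F)ˣ),
          Set.range d = {α, β} ∧
          A = (P : Matrix (Fin 4) (Fin 4) F) * Matrix.diagonal d *
              ((P⁻¹ : _) : Matrix (Fin 4) (Fin 4) F)} =
      q ^ 8 + q ^ 7 + 4 * q ^ 6 + 3 * q ^ 5 + 3 * q ^ 4 + 2 * q ^ 3 :=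
  stmt_8_general F q hq α β hαβ
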